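/- In a finite binary-action supermodular game, for every configuration x, the configuration f⁻(f⁺(x)) is a Nash equilibrium; moreover it is the greatest Nash equilibrium reachable from x by an improvement path. Symmetrically, f⁺(f⁻(x)) is the least Nash equilibrium reachable from x by an improvement path. -/

import Mathlib

/-!
Supermodularity makes a player's gain from switching up monotone in the others' actions.
Hence monotone improvement paths can be merged (if `y` and `z` are reachable, so is `y ⊔ z`),
so `f⁺(x)` is itself reachable and admits no upward improvement, and no improvement path from
`x` ever rises above it. Descending from `f⁺(x)` preserves the absence of upward improvements
and ends at `f⁻(f⁺(x))`, which admits no downward improvement either, so it is an equilibrium;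
an equilibrium below `f⁺(x)` blocks every descending step, so it stays below `f⁻(f⁺(x))`.
Relabelling the actions by `x ↦ -x` exchanges `f⁺` and `f⁻`, which gives the least equilibrium.
-/

variable {V : Type*} [Fintype V] [DecidableEq V]

/-- A configuration assigns each player an action in `{-1, +1}` (as integers). -/
def Conf (x : V → ℤ) : Prop := ∀ i, x i = 1 ∨ x i = -1

/-- Supermodularity (increasing differences) for a binary-action game with
utilities `u`. -/
def Supermodular (u : V → (V → ℤ) → ℝ) : Prop :=
  ∀ (i : V) (x y : V → ℤ), Conf x → Conf y → (∀ j, j ≠ i → y j ≤ x j) →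
    u i (Function.update y i 1) - u i (Function.update y i (-1)) ≤
      u i (Function.update x i 1) - u i (Function.update x i (-1))

/-- One step of an improvement path: a single player flips her action and
strictly increases her utility. -/
def ImpStep (u : V → (V → ℤ) → ℝ) (x y : V → ℤ) : Prop :=
  ∃ i : V, y = Function.update x i (-(x i)) ∧ u i x < u i y

/-- A monotone improvement step (the active player switches from -1 to +1). -/
def MonStep (u : V → (V → ℤ) → ℝ) (x y : V → ℤ) : Prop :=
  ImpStep u x y ∧ x ≤ y

/-- An anti-monotone improvement step (the active player switches from +1 to -1). -/
def AntiStep (u : V → (V → ℤ) → ℝ) (x y : V → ℤ) : Prop :=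
  ImpStep u x y ∧ y ≤ x

/-- `y` is reachable from `x` by an improvement path. -/
def ImpReach (u : V → (V → ℤ) → ℝ) : (V → ℤ) → (V → ℤ) → Prop :=
  Relation.ReflTransGen (ImpStep u)

/-- `y` is reachable from `x` by a monotone improvement path. -/
def MonReach (u : V → (V → ℤ) → ℝ) : (V → ℤ) → (V → ℤ) → Prop :=
  Relation.ReflTransGen (MonStep u)

/-- `y` is reachable from `x` by an anti-monotone improvement path. -/
def AntiReach (u : V → (V → ℤ) → ℝ) : (V → ℤ) → (V → ℤ) → Prop :=
  Relation.ReflTransGen (AntiStep u)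

/-- `x` is a (pure strategy Nash) equilibrium: no unilateral flip strictly
improves the deviator's utility. -/
def IsNash (u : V → (V → ℤ) → ℝ) (x : V → ℤ) : Prop :=
  ∀ i : V, u i (Function.update x i (-(x i))) ≤ u i x

open Classical in
/-- `fplus u x` is the componentwise supremum of the set of configurations
reachable from `x` by monotone improvement paths. -/
noncomputable def fplus (u : V → (V → ℤ) → ℝ) (x : V → ℤ) : V → ℤ :=
  fun i => if ∃ y, MonReach u x y ∧ y i = 1 then 1 else -1

open Classical in
/-- `fminus u x` is the componentwise infimum of the set of configurations
reachable from `x` by anti-monotone improvement paths. -/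
noncomputable def fminus (u : V → (V → ℤ) → ℝ) (x : V → ℤ) : V → ℤ :=
  fun i => if ∃ y, AntiReach u x y ∧ y i = -1 then -1 else 1

open Function Relation

theorem reflTransGen_neg_iff {α : Type*} [InvolutiveNeg α] {r p : α → α → Prop}
    (h : ∀ a b, r a b ↔ p (-a) (-b)) {a b : α} :
    ReflTransGen r a b ↔ ReflTransGen p (-a) (-b) := by
  refine ⟨ReflTransGen.lift Neg.neg (fun a b => (h a b).1) a b, fun hab => ?_⟩
  have hr : ∀ a b, p a b → r (-a) (-b) := fun a b hab => (h _ _).2 (by simpa using hab)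
  simpa [onFun] using ReflTransGen.lift Neg.neg hr _ _ hab

section Dynamics

variable {V : Type*} {u : V → (V → ℤ) → ℝ} {x y z w : V → ℤ}

theorem conf_neg_iff : Conf (-x) ↔ Conf x :=
  forall_congr' fun i => by
    rw [Pi.neg_apply, neg_eq_iff_eq_neg, neg_eq_iff_eq_neg, neg_neg, or_comm]

theorem Conf.sup (hx : Conf x) (hy : Conf y) : Conf (x ⊔ y) := fun i => by
  rcases hx i with hxi | hxi <;> rcases hy i with hyi | hyi <;> simp [hxi, hyi]

variable [DecidableEq V]

theorem conf_update (hx : Conf x) (i : V) {c : ℤ} (hc : c = 1 ∨ c = -1) :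
    Conf (update x i c) := by
  intro j
  rcases eq_or_ne j i with rfl | hj
  · simpa using hc
  · simpa [update_of_ne hj] using hx j

theorem ImpStep.ne (h : ImpStep u x y) : x ≠ y := by
  rintro rfl
  obtain ⟨i, -, hlt⟩ := h
  exact hlt.false

theorem ImpStep.conf (h : ImpStep u x y) (hx : Conf x) : Conf y := by
  obtain ⟨i, rfl, -⟩ := h
  exact conf_update hx i (by rcases hx i with hxi | hxi <;> simp [hxi])

theorem ImpReach.conf (h : ImpReach u x y) (hx : Conf x) : Conf y := by
  induction h with
  | refl => exact hx
  | tail _ hstep ih => exact hstep.conf ih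

theorem MonReach.impReach (h : MonReach u x y) : ImpReach u x y :=
  ReflTransGen.mono (fun _ _ hstep => hstep.1) _ _ h

theorem AntiReach.impReach (h : AntiReach u x y) : ImpReach u x y :=
  ReflTransGen.mono (fun _ _ hstep => hstep.1) _ _ h

theorem MonReach.le (h : MonReach u x y) : x ≤ y := by
  induction h with
  | refl => exact le_rfl
  | tail _ hstep ih => exact ih.trans hstep.2

theorem ImpStep.monStep_or_antiStep (h : ImpStep u x y) : MonStep u x y ∨ AntiStep u x y := by
  obtain ⟨i, rfl, hlt⟩ := h
  rcases le_or_gt 0 (x i) with hxi | hxi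
  · exact .inr ⟨⟨i, rfl, hlt⟩, update_le_self_iff.2 (by omega)⟩
  · exact .inl ⟨⟨i, rfl, hlt⟩, le_update_self_iff.2 (by omega)⟩

theorem isNash_iff_forall_not_impStep : IsNash u x ↔ ∀ y, ¬ImpStep u x y := by
  simp only [IsNash, ImpStep, not_exists, not_and, not_lt]
  exact ⟨fun h y i hy => hy ▸ h i, fun h i => h _ i rfl⟩

theorem isNash_of_not_monStep_of_not_antiStep (hmon : ∀ y, ¬MonStep u x y)
    (hanti : ∀ y, ¬AntiStep u x y) : IsNash u x :=
  isNash_iff_forall_not_impStep.2 fun y h => h.monStep_or_antiStep.elim (hmon y) (hanti y)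

def upGain (u : V → (V → ℤ) → ℝ) (i : V) (x : V → ℤ) : ℝ :=
  u i (update x i 1) - u i (update x i (-1))

theorem Supermodular.upGain_mono (hsm : Supermodular u) (hx : Conf x) (hy : Conf y)
    (hxy : x ≤ y) (i : V) : upGain u i x ≤ upGain u i y :=
  hsm i y x hy hx fun j _ => hxy j

theorem upGain_update_self (i : V) (c : ℤ) : upGain u i (update x i c) = upGain u i x := by
  simp only [upGain, update_idem]

theorem monStep_update (hi : x i = -1) (h : 0 < upGain u i x) : MonStep u x (update x i 1) := by
  have hx : update x i (-1) = x := update_eq_self_iff.2 hi.symm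
  refine ⟨⟨i, by rw [hi, neg_neg], ?_⟩, le_update_self_iff.2 (by omega)⟩
  rw [upGain, hx] at h
  linarith

theorem MonStep.exists_update (h : MonStep u x y) (hx : Conf x) :
    ∃ i, x i = -1 ∧ y = update x i 1 ∧ 0 < upGain u i x := by
  obtain ⟨⟨i, rfl, hlt⟩, hle⟩ := h
  have hi : x i = -1 := (hx i).resolve_left fun hi => by simpa [hi] using hle i
  have hx : update x i (-1) = x := update_eq_self_iff.2 hi.symm
  refine ⟨i, hi, by rw [hi, neg_neg], ?_⟩
  rw [hi, neg_neg] at hlt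
  rw [upGain, hx]
  linarith

theorem AntiStep.exists_update (h : AntiStep u x y) (hx : Conf x) :
    ∃ i, x i = 1 ∧ y = update x i (-1) ∧ upGain u i x < 0 := by
  obtain ⟨⟨i, rfl, hlt⟩, hle⟩ := h
  have hi : x i = 1 := (hx i).resolve_right fun hi => by simpa [hi] using hle i
  have hx : update x i 1 = x := update_eq_self_iff.2 hi.symm
  refine ⟨i, hi, by rw [hi], ?_⟩
  rw [hi] at hlt
  rw [upGain, hx]
  linarith

theorem ImpStep.le_of_not_monStep (h : ImpStep u x y) (hsm : Supermodular u) (hw : Conf w)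
    (hmax : ∀ y, ¬MonStep u w y) (hx : Conf x) (hxw : x ≤ w) : y ≤ w := by
  rcases h.monStep_or_antiStep with hmon | hanti
  · obtain ⟨i, -, rfl, hgain⟩ := hmon.exists_update hx
    refine update_le_iff.2 ⟨?_, fun j _ => hxw j⟩
    rcases hw i with hwi | hwi
    · exact hwi.ge
    · exact absurd (monStep_update hwi (hgain.trans_le (hsm.upGain_mono hx hw hxw i))) (hmax _)
  · exact hanti.2.trans hxw

theorem ImpReach.le_of_not_monStep (h : ImpReach u x y) (hsm : Supermodular u) (hw : Conf w)
    (hmax : ∀ y, ¬MonStep u w y) (hx : Conf x) (hxw : x ≤ w) : y ≤ w := by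
  induction h with
  | refl => exact hxw
  | tail hxy hstep ih => exact hstep.le_of_not_monStep hsm hw hmax (ImpReach.conf hxy hx) ih

theorem AntiStep.not_monStep (h : AntiStep u x y) (hsm : Supermodular u) (hx : Conf x)
    (hmax : ∀ z, ¬MonStep u x z) (z : V → ℤ) : ¬MonStep u y z := by
  obtain ⟨k, -, rfl, hk⟩ := h.exists_update hx
  intro hz
  obtain ⟨i, hi, rfl, hgain⟩ := hz.exists_update (conf_update hx k (.inr rfl))
  rcases eq_or_ne i k with rfl | hik
  · rw [upGain_update_self] at hgain
    exact lt_asymm hk hgain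
  · rw [update_of_ne hik] at hi
    have hle := hsm.upGain_mono (conf_update hx k (.inr rfl)) hx h.2 i
    exact hmax _ (monStep_update hi (hgain.trans_le hle))

theorem AntiReach.not_monStep (h : AntiReach u x y) (hsm : Supermodular u) (hx : Conf x)
    (hmax : ∀ z, ¬MonStep u x z) : ∀ z, ¬MonStep u y z := by
  induction h with
  | refl => exact hmax
  | tail hxy hstep ih => exact hstep.not_monStep hsm ((AntiReach.impReach hxy).conf hx) ih

theorem MonStep.monReach_sup (h : MonStep u x z) (hsm : Supermodular u) (hx : Conf x)
    (hy : Conf y) (hxy : x ≤ y) : MonReach u y (y ⊔ z) := by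
  obtain ⟨i, -, rfl, hgain⟩ := h.exists_update hx
  have hsup : y ⊔ update x i 1 = update y i 1 := by
    ext j
    rcases eq_or_ne j i with rfl | hj
    · rcases hy j with hyj | hyj <;> simp [hyj]
    · simp [update_of_ne hj, hxy j]
  rw [hsup]
  rcases hy i with hyi | hyi
  · rw [update_eq_self_iff.2 hyi.symm]
    exact .refl
  · exact .single (monStep_update hyi (hgain.trans_le (hsm.upGain_mono hx hy hxy i)))

theorem MonReach.monReach_sup (h : MonReach u x z) (hsm : Supermodular u) (hx : Conf x)
    (hy : Conf y) (hxy : x ≤ y) : MonReach u y (y ⊔ z) := by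
  induction h using ReflTransGen.head_induction_on generalizing y with
  | refl =>
    rw [sup_of_le_left hxy]
    exact .refl
  | head hxc hcz ih =>
    have hc := hxc.1.conf hx
    have hyc := hxc.monReach_sup hsm hx hy hxy
    have hcz' := ih hc (hy.sup hc) le_sup_right
    rw [sup_assoc, sup_of_le_right (MonReach.le hcz)] at hcz'
    exact hyc.trans hcz'

theorem fplus_conf (u : V → (V → ℤ) → ℝ) (x : V → ℤ) : Conf (fplus u x) := fun i => by
  unfold fplus
  split_ifs <;> simp

theorem MonReach.le_fplus (h : MonReach u x y) (hy : Conf y) : y ≤ fplus u x := fun i => by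
  show y i ≤ fplus u x i
  rcases hy i with hyi | hyi
  · rw [hyi, fplus, if_pos ⟨y, h, hyi⟩]
  · rcases fplus_conf u x i with hfi | hfi <;> omega

theorem exists_monReach_fplus_le (hsm : Supermodular u) (hx : Conf x) (s : Finset V) :
    ∃ y, MonReach u x y ∧ ∀ i ∈ s, fplus u x i ≤ y i := by
  induction s using Finset.induction_on with
  | empty => exact ⟨x, .refl, by simp⟩
  | insert i s _ ih =>
    obtain ⟨y, hxy, hy⟩ := ih
    have hyc := hxy.impReach.conf hx
    by_cases hi : ∃ z, MonReach u x z ∧ z i = 1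
    · obtain ⟨z, hxz, hzi⟩ := hi
      refine ⟨y ⊔ z, hxy.trans (hxz.monReach_sup hsm hx hyc hxy.le),
        Finset.forall_mem_insert _ _ _ |>.2 ⟨?_, fun j hj => (hy j hj).trans le_sup_left⟩⟩
      calc fplus u x i ≤ 1 := by rcases fplus_conf u x i with h | h <;> omega
        _ = z i := hzi.symm
        _ ≤ (y ⊔ z) i := le_sup_right
    · refine ⟨y, hxy, Finset.forall_mem_insert _ _ _ |>.2 ⟨?_, hy⟩⟩
      rw [fplus, if_neg hi]
      rcases hyc i with h | h <;> omega

end Dynamics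

section Duality

variable {V : Type*} {u : V → (V → ℤ) → ℝ} {x y w : V → ℤ}

/-- Relabelling the actions `x ↦ -x` turns anti-monotone improvement paths of `u` into monotone
ones of `dualGame u` and keeps the game supermodular; this exchanges `fminus` and `fplus`. -/
def dualGame (u : V → (V → ℤ) → ℝ) : V → (V → ℤ) → ℝ := fun i x => u i (-x)

theorem dualGame_dualGame (u : V → (V → ℤ) → ℝ) : dualGame (dualGame u) = u := by
  funext i x
  simp only [dualGame, neg_neg]

variable [DecidableEq V]

theorem Supermodular.dualGame (hsm : Supermodular u) : Supermodular (dualGame u) := by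
  intro i x y hx hy hyx
  have := hsm i (-y) (-x) (conf_neg_iff.2 hy) (conf_neg_iff.2 hx) fun j hj => neg_le_neg (hyx j hj)
  simp only [_root_.dualGame, ← update_neg, neg_neg] at this ⊢
  linarith

theorem impStep_dualGame : ImpStep (dualGame u) x y ↔ ImpStep u (-x) (-y) :=
  exists_congr fun i => and_congr (by rw [Pi.neg_apply, update_neg, neg_inj]) Iff.rfl

theorem monStep_dualGame : MonStep (dualGame u) x y ↔ AntiStep u (-x) (-y) :=
  and_congr impStep_dualGame neg_le_neg_iff.symm

theorem impReach_dualGame : ImpReach (dualGame u) x y ↔ ImpReach u (-x) (-y) :=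
  reflTransGen_neg_iff fun _ _ => impStep_dualGame

theorem monReach_dualGame : MonReach (dualGame u) x y ↔ AntiReach u (-x) (-y) :=
  reflTransGen_neg_iff fun _ _ => monStep_dualGame

theorem isNash_dualGame : IsNash (dualGame u) x ↔ IsNash u (-x) := by
  simp only [isNash_iff_forall_not_impStep, impStep_dualGame]
  exact ⟨fun h y => by simpa using h (-y), fun h y => h (-y)⟩

theorem fminus_eq_neg_fplus_dualGame (u : V → (V → ℤ) → ℝ) (x : V → ℤ) :
    fminus u x = -fplus (dualGame u) (-x) := by
  funext i
  have hex :
      (∃ y, MonReach (dualGame u) (-x) y ∧ y i = 1) ↔ ∃ y, AntiReach u x y ∧ y i = -1 := by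
    simp only [monReach_dualGame, neg_neg]
    exact ⟨fun ⟨y, h, hy⟩ => ⟨-y, h, by simp [hy]⟩,
      fun ⟨y, h, hy⟩ => ⟨-y, by simpa using h, by simp [hy]⟩⟩
  by_cases hc : ∃ y, AntiReach u x y ∧ y i = -1
  · simp [fminus, fplus, hc, hex.2 hc]
  · simp [fminus, fplus, hc, mt hex.1 hc]

theorem ImpReach.ge_of_not_antiStep (h : ImpReach u x y) (hsm : Supermodular u) (hw : Conf w)
    (hmin : ∀ y, ¬AntiStep u w y) (hx : Conf x) (hwx : w ≤ x) : w ≤ y := by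
  have hdual : ImpReach (dualGame u) (-x) (-y) := impReach_dualGame.2 (by simpa using h)
  refine neg_le_neg_iff.1 (hdual.le_of_not_monStep hsm.dualGame (conf_neg_iff.2 hw) ?_
    (conf_neg_iff.2 hx) (neg_le_neg hwx))
  exact fun y hy => hmin (-y) (by simpa using monStep_dualGame.1 hy)

end Duality

section Extremal

variable {u : V → (V → ℤ) → ℝ} {x : V → ℤ}

theorem monReach_fplus (hsm : Supermodular u) (hx : Conf x) : MonReach u x (fplus u x) := by
  obtain ⟨y, hxy, hy⟩ := exists_monReach_fplus_le hsm hx Finset.univ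
  have hfy : fplus u x = y :=
    le_antisymm (fun i => hy i (Finset.mem_univ i)) (hxy.le_fplus (hxy.impReach.conf hx))
  rwa [hfy]

theorem not_monStep_fplus (hsm : Supermodular u) (hx : Conf x) (y : V → ℤ) :
    ¬MonStep u (fplus u x) y := fun h =>
  h.1.ne <| le_antisymm h.2 <|
    MonReach.le_fplus ((monReach_fplus hsm hx).tail h) (h.1.conf (fplus_conf u x))

theorem antiReach_fminus (hsm : Supermodular u) (hx : Conf x) : AntiReach u x (fminus u x) := by
  have := monReach_dualGame.1 (monReach_fplus hsm.dualGame (conf_neg_iff.2 hx))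
  rwa [neg_neg, ← fminus_eq_neg_fplus_dualGame] at this

theorem not_antiStep_fminus (hsm : Supermodular u) (hx : Conf x) (y : V → ℤ) :
    ¬AntiStep u (fminus u x) y := by
  rw [fminus_eq_neg_fplus_dualGame, ← neg_neg y, ← monStep_dualGame]
  exact not_monStep_fplus hsm.dualGame (conf_neg_iff.2 hx) _

theorem isGreatest_fminus_fplus (hsm : Supermodular u) (hx : Conf x) :
    IsGreatest {z | IsNash u z ∧ ImpReach u x z} (fminus u (fplus u x)) := by
  have ha := fplus_conf u x
  have hmax := not_monStep_fplus hsm hx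
  have hab := antiReach_fminus hsm ha
  refine ⟨⟨?_, (monReach_fplus hsm hx).impReach.trans hab.impReach⟩, ?_⟩
  · exact isNash_of_not_monStep_of_not_antiStep (hab.not_monStep hsm ha hmax)
      (not_antiStep_fminus hsm ha)
  · rintro z ⟨hzN, hzR⟩
    have hza : z ≤ fplus u x := hzR.le_of_not_monStep hsm ha hmax hx (MonReach.le_fplus .refl hx)
    exact hab.impReach.ge_of_not_antiStep hsm (hzR.conf hx)
      (fun y hy => isNash_iff_forall_not_impStep.1 hzN y hy.1) ha hza

theorem isLeast_fplus_fminus (hsm : Supermodular u) (hx : Conf x) :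
    IsLeast {z | IsNash u z ∧ ImpReach u x z} (fplus u (fminus u x)) := by
  obtain ⟨⟨hN, hR⟩, hmax⟩ := isGreatest_fminus_fplus hsm.dualGame (conf_neg_iff.2 hx)
  have hval : fplus u (fminus u x) = -fminus (dualGame u) (fplus (dualGame u) (-x)) := by
    rw [fminus_eq_neg_fplus_dualGame u, fminus_eq_neg_fplus_dualGame (dualGame u),
      dualGame_dualGame, neg_neg]
  rw [hval]
  refine ⟨⟨isNash_dualGame.1 hN, by simpa using impReach_dualGame.1 hR⟩, ?_⟩
  rintro z ⟨hzN, hzR⟩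
  exact neg_le.1 <| hmax ⟨isNash_dualGame.2 (by simpa using hzN),
    impReach_dualGame.2 (by simpa using hzR)⟩

end Extremal

/-- `fminus u (fplus u x)` is the greatest Nash equilibrium
reachable from `x` by an improvement path, and `fplus u (fminus u x)` is the
least one. -/
theorem extremal_reachable_nash (u : V → (V → ℤ) → ℝ) (hsm : Supermodular u)
    (x : V → ℤ) (hx : Conf x) :
    (IsNash u (fminus u (fplus u x)) ∧ ImpReach u x (fminus u (fplus u x)) ∧
      ∀ z, IsNash u z → ImpReach u x z → z ≤ fminus u (fplus u x)) ∧
    (IsNash u (fplus u (fminus u x)) ∧ ImpReach u x (fplus u (fminus u x)) ∧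
      ∀ z, IsNash u z → ImpReach u x z → fplus u (fminus u x) ≤ z) := by
  obtain ⟨⟨hgN, hgR⟩, hgmax⟩ := isGreatest_fminus_fplus hsm hx
  obtain ⟨⟨hlN, hlR⟩, hlmin⟩ := isLeast_fplus_fminus hsm hx
  exact ⟨⟨hgN, hgR, fun z hN hR => hgmax ⟨hN, hR⟩⟩,
    ⟨hlN, hlR, fun z hN hR => hlmin ⟨hN, hR⟩⟩⟩
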